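/- For ξ ∈ ℝ let c(ξ) := 1/(2 − ξ² − 3iξ), f₊(x,ξ) := c(ξ)·(D₂*(D₁*(e_ξ)))(x) with e_ξ(x) = e^{ixξ}, and f₋(x,ξ) := c(ξ)·(D₂*(D₁*(e_{-ξ})))(x). Then the Wronskian W(ξ)(x) := f₊(x,ξ)·∂ₓf₋(x,ξ) − ∂ₓf₊(x,ξ)·f₋(x,ξ) is independent of x, and with the transmission coefficient T(ξ) := (ξ² − 2 + 3iξ)/(ξ² − 2 − 3iξ) one has T(ξ)·W(ξ) = −2iξ for every ξ ∈ ℝ; moreover |T(ξ)| = 1 for all ξ ∈ ℝ. -/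

import Mathlib

noncomputable section

/-- `sech x = 1 / cosh x`. -/
def sech (x : ℝ) : ℝ := 1 / Real.cosh x

/-- `D₁* f = −f' + tanh · f`. -/
def D1s (f : ℝ → ℂ) (x : ℝ) : ℂ := -(deriv f x) + (Real.tanh x : ℂ) * f x

/-- `D₂* f = −f' + 2 tanh · f`. -/
def D2s (f : ℝ → ℂ) (x : ℝ) : ℂ := -(deriv f x) + 2 * (Real.tanh x : ℂ) * f x

/-- `c(ξ) = 1/(2 − ξ² − 3iξ)`. -/
def cJost (ξ : ℝ) : ℂ := (2 - (ξ : ℂ) ^ 2 - 3 * Complex.I * (ξ : ℂ))⁻¹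

/-- The plane wave `e_ξ(x) = e^{ixξ}`. -/
def eexp (ξ : ℝ) : ℝ → ℂ := fun x => Complex.exp (Complex.I * (x : ℂ) * (ξ : ℂ))

/-- The Jost solution `f₊(·,ξ) = c(ξ) D₂*(D₁*(e^{i·ξ}))`. -/
def fplus (ξ : ℝ) : ℝ → ℂ := fun x => cJost ξ * D2s (D1s (eexp ξ)) x

/-- The Jost solution `f₋(·,ξ) = c(ξ) D₂*(D₁*(e^{-i·ξ}))`. -/
def fminus (ξ : ℝ) : ℝ → ℂ := fun x => cJost ξ * D2s (D1s (eexp (-ξ))) x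

/-- The Wronskian `W(ξ)(x) = f₊ ∂ₓ f₋ − ∂ₓ f₊ f₋`. -/
def Wron (ξ x : ℝ) : ℂ := fplus ξ x * deriv (fminus ξ) x - deriv (fplus ξ) x * fminus ξ x

/-- The transmission coefficient `T(ξ) = (ξ² − 2 + 3iξ)/(ξ² − 2 − 3iξ)`. -/
def Tcoef (ξ : ℝ) : ℂ :=
  ((ξ : ℂ) ^ 2 - 2 + 3 * Complex.I * (ξ : ℂ)) / ((ξ : ℂ) ^ 2 - 2 - 3 * Complex.I * (ξ : ℂ))

/-!
Both Jost solutions are an amplitude polynomial in `t = tanh x` times a plane wave: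
`f₊ = c(ξ) P_ξ(t) e^{ixξ}` and `f₋ = c(ξ) P_{-ξ}(t) e^{-ixξ}` with `P_ξ(t) = 3t² − 3iξt − 1 − ξ²`.
The Wronskian of `a e^{ixξ}` and `b e^{-ixξ}` is `a b' − a' b − 2iξ a b`, and with `t' = 1 − t²`
all `t`-dependence cancels, leaving `W = −2iξ c(ξ)² (1 + ξ²)(4 + ξ²)`. Factoring
`2 − ξ² − 3iξ = (1 − iξ)(2 − iξ)` shows `T = z̄ / z` for `z = (1 + iξ)(2 + iξ)`, whence `|T| = 1`
and `W = −2iξ / T`.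
-/

open Complex (I)

theorem Real.hasDerivAt_tanh (x : ℝ) : HasDerivAt Real.tanh (1 - Real.tanh x ^ 2) x := by
  have hcosh : Real.cosh x ≠ 0 := (Real.cosh_pos x).ne'
  have h : HasDerivAt (fun y => Real.sinh y / Real.cosh y) _ x :=
    (Real.hasDerivAt_sinh x).div (Real.hasDerivAt_cosh x) hcosh
  rw [← funext Real.tanh_eq_sinh_div_cosh] at h
  refine h.congr_deriv ?_
  rw [Real.tanh_eq_sinh_div_cosh]
  field_simp

theorem hasDerivAt_ofReal_tanh (x : ℝ) :
    HasDerivAt (fun y : ℝ => (Real.tanh y : ℂ)) (1 - (Real.tanh x : ℂ) ^ 2) x := by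
  simpa using (Real.hasDerivAt_tanh x).ofReal_comp

theorem hasDerivAt_eexp (ξ x : ℝ) : HasDerivAt (eexp ξ) (I * ξ * eexp ξ x) x := by
  have h : HasDerivAt (fun w : ℂ => I * w * ξ) (I * ξ) x := by
    simpa using ((hasDerivAt_id (x : ℂ)).const_mul I).mul_const (ξ : ℂ)
  exact h.cexp.comp_ofReal.congr_deriv (by rw [eexp]; ring)

theorem HasDerivAt.mul_eexp {a : ℝ → ℂ} {a' : ℂ} {x : ℝ} (ha : HasDerivAt a a' x) (ξ : ℝ) :
    HasDerivAt (fun y => a y * eexp ξ y) ((a' + I * ξ * a x) * eexp ξ x) x :=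
  (ha.mul (hasDerivAt_eexp ξ x)).congr_deriv (by ring)

theorem D1s_eexp (ξ : ℝ) : D1s (eexp ξ) = fun x => (Real.tanh x - I * ξ) * eexp ξ x := by
  funext x
  rw [D1s, (hasDerivAt_eexp ξ x).deriv]
  ring

theorem D2s_mul_eexp {a a' : ℝ → ℂ} (ha : ∀ x, HasDerivAt a (a' x) x) (ξ : ℝ) :
    D2s (fun x => a x * eexp ξ x) =
      fun x => (-a' x - I * ξ * a x + 2 * Real.tanh x * a x) * eexp ξ x := by
  funext x
  rw [D2s, ((ha x).mul_eexp ξ).deriv]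
  ring

def jostAmplitude (ξ : ℝ) (t : ℂ) : ℂ := 3 * t ^ 2 - 3 * I * ξ * t - 1 - (ξ : ℂ) ^ 2

theorem hasDerivAt_jostAmplitude_tanh (ξ x : ℝ) :
    HasDerivAt (fun y : ℝ => jostAmplitude ξ (Real.tanh y))
      ((6 * Real.tanh x - 3 * I * ξ) * (1 - (Real.tanh x : ℂ) ^ 2)) x := by
  have hT := hasDerivAt_ofReal_tanh x
  unfold jostAmplitude
  simp only [sq]
  exact ((((hT.mul hT).const_mul 3).sub (hT.const_mul (3 * I * ξ))).sub_const 1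
    |>.sub_const _).congr_deriv (by ring)

theorem D2s_D1s_eexp (ξ : ℝ) :
    D2s (D1s (eexp ξ)) = fun x => jostAmplitude ξ (Real.tanh x) * eexp ξ x := by
  rw [D1s_eexp, D2s_mul_eexp (fun x => (hasDerivAt_ofReal_tanh x).sub_const (I * ξ))]
  funext x
  rw [jostAmplitude]
  linear_combination (ξ : ℂ) ^ 2 * eexp ξ x * Complex.I_sq

theorem wronskian_mul_eexp {a b : ℝ → ℂ} {a' b' : ℂ} {x : ℝ}
    (ha : HasDerivAt a a' x) (hb : HasDerivAt b b' x) (ξ : ℝ) :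
    a x * eexp ξ x * deriv (fun y => b y * eexp (-ξ) y) x
        - deriv (fun y => a y * eexp ξ y) x * (b x * eexp (-ξ) x) =
      a x * b' - a' * b x - 2 * I * ξ * a x * b x := by
  have hE : eexp ξ x * eexp (-ξ) x = 1 := by
    rw [eexp, eexp, ← Complex.exp_add, ← Complex.exp_zero]
    push_cast
    ring_nf
  rw [(hb.mul_eexp (-ξ)).deriv, (ha.mul_eexp ξ).deriv]
  push_cast
  linear_combination (a x * b' - a' * b x - 2 * I * ξ * a x * b x) * hE

theorem jostAmplitude_wronskian (ξ : ℝ) (t : ℂ) :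
    jostAmplitude ξ t * ((6 * t - 3 * I * ((-ξ : ℝ) : ℂ)) * (1 - t ^ 2))
        - (6 * t - 3 * I * ξ) * (1 - t ^ 2) * jostAmplitude (-ξ) t
        - 2 * I * ξ * jostAmplitude ξ t * jostAmplitude (-ξ) t =
      -2 * I * ξ * ((1 + (ξ : ℂ) ^ 2) * (4 + (ξ : ℂ) ^ 2)) := by
  simp only [jostAmplitude]
  push_cast
  linear_combination 18 * I * (ξ : ℂ) ^ 3 * t ^ 2 * Complex.I_sq

theorem Wron_eq (ξ x : ℝ) :
    Wron ξ x = cJost ξ ^ 2 * (-2 * I * ξ * ((1 + (ξ : ℂ) ^ 2) * (4 + (ξ : ℂ) ^ 2))) := by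
  have hplus : fplus ξ = fun y => cJost ξ * jostAmplitude ξ (Real.tanh y) * eexp ξ y := by
    unfold fplus
    simp only [D2s_D1s_eexp, mul_assoc]
  have hminus : fminus ξ = fun y => cJost ξ * jostAmplitude (-ξ) (Real.tanh y) * eexp (-ξ) y := by
    unfold fminus
    simp only [D2s_D1s_eexp, mul_assoc]
  rw [Wron, hplus, hminus, wronskian_mul_eexp ((hasDerivAt_jostAmplitude_tanh ξ x).const_mul _)
    ((hasDerivAt_jostAmplitude_tanh (-ξ) x).const_mul _)]
  linear_combination cJost ξ ^ 2 * jostAmplitude_wronskian ξ (Real.tanh x)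

theorem ofReal_add_I_mul_ne_zero {a : ℝ} (ha : a ≠ 0) (b : ℝ) : (a : ℂ) + I * b ≠ 0 := fun h =>
  ha (by simpa using congrArg Complex.re h)

theorem cJost_eq (ξ : ℝ) : cJost ξ = ((1 - I * ξ) * (2 - I * ξ))⁻¹ := by
  rw [cJost]
  congr 1
  linear_combination -(ξ : ℂ) ^ 2 * Complex.I_sq

theorem Tcoef_eq (ξ : ℝ) : Tcoef ξ = (1 - I * ξ) * (2 - I * ξ) / ((1 + I * ξ) * (2 + I * ξ)) := by
  rw [Tcoef, ← neg_div_neg_eq]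
  congr 1 <;> linear_combination -(ξ : ℂ) ^ 2 * Complex.I_sq

theorem norm_Tcoef (ξ : ℝ) : ‖Tcoef ξ‖ = 1 := by
  have hconj : (1 - I * ξ) * (2 - I * ξ) = (starRingEnd ℂ) ((1 + I * ξ) * (2 + I * ξ)) := by
    simp [map_mul, map_ofNat, Complex.conj_ofReal, sub_eq_add_neg]
  have hne : (1 + I * ξ) * (2 + I * ξ) ≠ 0 := mul_ne_zero
    (by exact_mod_cast ofReal_add_I_mul_ne_zero one_ne_zero ξ)
    (by exact_mod_cast ofReal_add_I_mul_ne_zero two_ne_zero ξ)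
  rw [Tcoef_eq, hconj, norm_div, Complex.norm_conj, div_self (norm_ne_zero_iff.2 hne)]

theorem Wron_eq_div_Tcoef (ξ x : ℝ) : Wron ξ x = -2 * I * ξ / Tcoef ξ := by
  have h1 : (1 : ℂ) - I * ξ ≠ 0 := by
    simpa [sub_eq_add_neg] using ofReal_add_I_mul_ne_zero one_ne_zero (-ξ)
  have h2 : (2 : ℂ) - I * ξ ≠ 0 := by
    simpa [sub_eq_add_neg] using ofReal_add_I_mul_ne_zero two_ne_zero (-ξ)
  rw [Wron_eq, cJost_eq, Tcoef_eq]
  field_simp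
  linear_combination -(ξ : ℂ) * (5 * (ξ : ℂ) ^ 2 + (ξ : ℂ) ^ 4 * (1 - I ^ 2)) * Complex.I_sq

/-- The Wronskian is constant in `x`, the relation `T(ξ) W(ξ) = −2iξ`, and `|T(ξ)| = 1`. -/
theorem wronskian_transmission :
    (∀ ξ x y : ℝ, Wron ξ x = Wron ξ y) ∧
      (∀ ξ x : ℝ, Tcoef ξ * Wron ξ x = -2 * Complex.I * (ξ : ℂ)) ∧
      ∀ ξ : ℝ, ‖Tcoef ξ‖ = 1 := by
  refine ⟨fun ξ x y => by rw [Wron_eq, Wron_eq], fun ξ x => ?_, norm_Tcoef⟩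
  have hT : Tcoef ξ ≠ 0 := norm_ne_zero_iff.1 (by rw [norm_Tcoef]; exact one_ne_zero)
  rw [Wron_eq_div_Tcoef, mul_div_cancel₀ _ hT]
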